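/- arXiv:1209.4414 — 3 statements merged into one kernel-verified Lean document; each statement's English description precedes it below -/
import Mathlib

section
/- Let R = F_2[u]/(u^4 - 1) and let f ∈ R[x] be a basic irreducible polynomial, i.e., a polynomial whose image f̄ under the reduction map R[x] → F_2[x] sending u to 1 is irreducible. Then f is primary: whenever g·h lies in the ideal (f) and h ∉ (f), some power of g lies in (f). -/
noncomputable def R := AdjoinRoot (Polynomial.X ^ 4 - 1 : Polynomial (ZMod 2))

noncomputable instance : CommRing R := AdjoinRoot.instCommRing _

noncomputable def uu : R := AdjoinRoot.root _

/-- Reduction modulo the maximal ideal, sending u to 1. -/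
noncomputable def rho : R →+* ZMod 2 :=
  AdjoinRoot.lift (RingHom.id (ZMod 2)) 1 (by simp)

/-!
The kernel of the reduction `R → 𝔽₂` is nil (every `a : R` satisfies `a ^ 4 = ρ(a)`, since
Frobenius fixes `𝔽₂` and `u ^ 4 = 1`), hence so is the kernel of `R[x] → 𝔽₂[x]`. So the radical
of `(f)` is the preimage `(f) + ker` of `(f̄)`, which is maximal because `f̄` is irreducible, and
an ideal with maximal radical is primary.
-/

open Polynomial

namespace Ideal

variable {A B : Type*} [CommRing A] [CommRing B]

theorem isPrimary_of_isMaximal_map {ψ : A →+* B} (hψ : Function.Surjective ψ)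
    (hker : RingHom.ker ψ ≤ nilradical A) {I : Ideal A} (hI : (I.map ψ).IsMaximal) :
    I.IsPrimary := by
  have hmax : ((I.map ψ).comap ψ).IsMaximal := comap_isMaximal_of_surjective ψ hψ
  have hrad : I.radical = (I.map ψ).comap ψ := by
    refine le_antisymm (hmax.isPrime.radical_le_iff.mpr le_comap_map) ?_
    rw [comap_map_of_surjective' ψ hψ]
    exact sup_le le_radical (hker.trans (radical_mono bot_le))
  exact isPrimary_of_isMaximal_radical (hrad ▸ hmax)

end Ideal

namespace Polynomial

variable {A K : Type*} [CommRing A] [Field K]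

theorem ker_mapRingHom_le_nilradical {φ : A →+* K} (hφ : RingHom.ker φ ≤ nilradical A) :
    RingHom.ker (mapRingHom φ) ≤ nilradical A[X] := fun p hp =>
  Polynomial.isNilpotent_iff.mpr fun i => hφ <| by
    simpa [coeff_map] using congrArg (coeff · i) (RingHom.mem_ker.mp hp)

theorem isPrimary_span_singleton_of_irreducible_map {φ : A →+* K} (hφ : Function.Surjective φ)
    (hker : RingHom.ker φ ≤ nilradical A) {f : A[X]} (hf : Irreducible (f.map φ)) :
    (Ideal.span {f}).IsPrimary := by
  refine Ideal.isPrimary_of_isMaximal_map (map_surjective φ hφ)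
    (ker_mapRingHom_le_nilradical hker) ?_
  rw [Ideal.map_span, Set.image_singleton]
  exact PrincipalIdealRing.isMaximal_of_irreducible hf

end Polynomial

lemma rho_surjective : Function.Surjective rho := fun x =>
  ⟨AdjoinRoot.of _ x, AdjoinRoot.lift_of _⟩

lemma rho_mk (p : (ZMod 2)[X]) : rho (AdjoinRoot.mk _ p) = p.eval 1 :=
  (AdjoinRoot.lift_mk _ _).trans eval₂_id

lemma mk_pow_four (p : (ZMod 2)[X]) :
    AdjoinRoot.mk (X ^ 4 - 1) p ^ 4 = AdjoinRoot.of _ (p.eval 1) := by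
  have hexp : p ^ 4 = expand (ZMod 2) 4 p := by
    rw [show (4 : ℕ) = 2 * 2 from rfl, pow_mul, ← ZMod.expand_card, ← ZMod.expand_card,
      expand_expand]
  have hroot : AdjoinRoot.root (X ^ 4 - 1 : (ZMod 2)[X]) ^ 4 = 1 := by
    have h := AdjoinRoot.eval₂_root (X ^ 4 - 1 : (ZMod 2)[X])
    rwa [eval₂_sub, eval₂_X_pow, eval₂_one, sub_eq_zero] at h
  rw [← map_pow, hexp, ← AdjoinRoot.aeval_eq, expand_aeval, hroot,
    ← map_one (algebraMap (ZMod 2) (AdjoinRoot (X ^ 4 - 1 : (ZMod 2)[X]))),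
    aeval_algebraMap_apply_eq_algebraMap_eval]
  rfl

lemma ker_rho_le_nilradical : RingHom.ker rho ≤ nilradical R := fun a ha => by
  obtain ⟨p, rfl⟩ := AdjoinRoot.mk_surjective a
  refine mem_nilradical.mpr ⟨4, ?_⟩
  have hp : p.eval 1 = 0 := (rho_mk p).symm.trans ha
  exact (mk_pow_four p).trans (by rw [hp, map_zero]; rfl)

theorem stmt5 (f : Polynomial R)
    (hbasic : Irreducible (f.map rho)) :
    ∀ g h : Polynomial R, g * h ∈ Ideal.span {f} → h ∉ Ideal.span {f} →
      ∃ k : ℕ, 0 < k ∧ g ^ k ∈ Ideal.span {f} := by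
  intro g h hgh hh
  have hprimary := Polynomial.isPrimary_span_singleton_of_irreducible_map rho_surjective
    ker_rho_le_nilradical hbasic
  obtain ⟨n, hn⟩ := ((Ideal.isPrimary_iff.mp hprimary).2 (mul_comm g h ▸ hgh)).resolve_left hh
  exact ⟨n + 1, n.succ_pos, pow_succ' g n ▸ Ideal.mul_mem_left _ g hn⟩
end

section
/- Let m be an odd positive integer such that 2^i ≡ −1 (mod m) for some positive integer i. Then every monic irreducible factor f of x^m − 1 over F_2 is self-reciprocal, i.e., f equals its reciprocal polynomial f* = x^{deg f}·f(1/x). -/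
/-!
Let `α` be the class of `X` in `F[X]/(f)`, where `F` has `q` elements. From `f ∣ X^m - 1` we get
`α^m = 1`, so `q^i ≡ -1 (mod m)` gives `α^(q^i) * α = 1`. Since `F` is finite, `g(a^q) = g(a)^q`
for every `g ∈ F[X]`, so `α^(q^i) = α⁻¹` is again a root of `f`; equivalently `α` is a root of
the reciprocal polynomial, i.e. `f ∣ f*`. As `deg f* ≤ deg f`, `f*` is a scalar multiple of the
monic `f`, and over `𝔽₂` the only nonzero scalar is `1`.
-/

open Polynomial

theorem Polynomial.aeval_pow_card_pow {F A : Type*} [Field F] [Fintype F] [CommSemiring A]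
    [Algebra F A] (a : A) (f : F[X]) (n : ℕ) :
    aeval (a ^ Fintype.card F ^ n) f = aeval a f ^ Fintype.card F ^ n := by
  induction n with
  | zero => simp
  | succ n ih =>
    rw [pow_succ, pow_mul, ← expand_aeval, FiniteField.expand_card, map_pow, ih, ← pow_mul]

theorem Polynomial.aeval_reverse_eq_zero_of_mul_eq_one {R S : Type*} [CommSemiring R]
    [CommSemiring S] [Algebra R S] {f : R[X]} {x y : S} (hxy : x * y = 1) (hx : aeval x f = 0) :
    aeval y f.reverse = 0 := by
  let : Invertible x := ⟨y, by rw [mul_comm, hxy], hxy⟩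
  have hinv : ⅟x = y := rfl
  rw [aeval_def, ← hinv, eval₂_reverse_eq_zero_iff, ← aeval_def, hx]

theorem Polynomial.dvd_reverse_of_dvd_X_pow_sub_one {F : Type*} [Field F] [Fintype F]
    {m i : ℕ} (hmi : m ∣ Fintype.card F ^ i + 1) {f : F[X]} (hf : f ∣ X ^ m - 1) :
    f ∣ f.reverse := by
  set α := AdjoinRoot.root f
  have hαm : α ^ m = 1 := by
    rw [← sub_eq_zero]
    simpa [AdjoinRoot.aeval_eq] using AdjoinRoot.mk_eq_zero.mpr hf
  obtain ⟨k, hk⟩ := hmi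
  have hαinv : α ^ Fintype.card F ^ i * α = 1 := by
    rw [← pow_succ, hk, pow_mul, hαm, one_pow]
  have hroot : aeval (α ^ Fintype.card F ^ i) f = 0 := by
    rw [aeval_pow_card_pow, AdjoinRoot.aeval_eq, AdjoinRoot.mk_self, zero_pow (by positivity)]
  rw [← AdjoinRoot.mk_eq_zero, ← AdjoinRoot.aeval_eq]
  exact aeval_reverse_eq_zero_of_mul_eq_one hαinv hroot

theorem Polynomial.Monic.reverse_eq_C_trailingCoeff_mul_of_dvd_reverse {R : Type*}
    [CommSemiring R] {f : R[X]} (hf : f.Monic) (h : f ∣ f.reverse) :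
    f.reverse = C f.trailingCoeff * f :=
  reverse_leadingCoeff f ▸
    eq_leadingCoeff_mul_of_monic_of_dvd_of_natDegree_le hf h (reverse_natDegree_le f)

theorem Polynomial.Monic.reverse_eq_self_of_dvd_reverse {f : (ZMod 2)[X]} (hf : f.Monic)
    (h : f ∣ f.reverse) : f.reverse = f := by
  have htrail : f.trailingCoeff = 1 := by
    have hne := trailingCoeff_nonzero_iff_nonzero.mpr hf.ne_zero
    generalize f.trailingCoeff = c at hne ⊢
    decide +revert
  rw [hf.reverse_eq_C_trailingCoeff_mul_of_dvd_reverse h, htrail, C_1, one_mul]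

theorem stmt10_general (m : ℕ)
    (h : ∃ i : ℕ, 0 < i ∧ (2 : ZMod m) ^ i = -1) :
    ∀ f : Polynomial (ZMod 2), f.Monic → Irreducible f →
      f ∣ Polynomial.X ^ m - 1 → f.reverse = f := by
  obtain ⟨i, -, h2i⟩ := h
  intro f hf _ hdvd
  have hmi : m ∣ Fintype.card (ZMod 2) ^ i + 1 := by
    rw [ZMod.card, ← ZMod.natCast_eq_zero_iff]
    push_cast
    rw [h2i, neg_add_cancel]
  exact hf.reverse_eq_self_of_dvd_reverse (dvd_reverse_of_dvd_X_pow_sub_one hmi hdvd)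

theorem stmt10 (m : ℕ) (hm : 0 < m) (hodd : Odd m)
    (h : ∃ i : ℕ, 0 < i ∧ (2 : ZMod m) ^ i = -1) :
    ∀ f : Polynomial (ZMod 2), f.Monic → Irreducible f →
      f ∣ Polynomial.X ^ m - 1 → f.reverse = f :=
  stmt10_general m h
end

section
/- Let R = F_2[u]/(u^4 - 1) and n a positive integer. In the quotient ring R_n = R[x]/(x^n - 1), every ideal that is a product of ideals of the form (g, (u+1)^t) with g ∈ F_2[x] dividing x^n - 1 and 0 ≤ t ≤ 4 can be generated by elements f_0, (u+1)f_1, (u+1)^2 f_2, (u+1)^3 f_3 with f_3 | f_2 | f_1 | f_0 | x^n - 1 in F_2[x]. -/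
noncomputable instance : Algebra (ZMod 2) R :=
  inferInstanceAs (Algebra (ZMod 2) (AdjoinRoot _))

/-- The quotient ring R_n = R[x]/(x^n - 1). -/
noncomputable def Rn (n : ℕ) := AdjoinRoot (Polynomial.X ^ n - 1 : Polynomial R)

noncomputable instance (n : ℕ) : CommRing (Rn n) := AdjoinRoot.instCommRing _

noncomputable instance (n : ℕ) : Algebra R (Rn n) :=
  inferInstanceAs (Algebra R (AdjoinRoot _))

/-- The natural map F_2[x] → R_n. -/
noncomputable def iota (n : ℕ) : Polynomial (ZMod 2) →+* Rn n :=
  (AdjoinRoot.mk _).comp (Polynomial.mapRingHom (algebraMap (ZMod 2) R))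

/-- The image of u + 1 in R_n. -/
noncomputable def w (n : ℕ) : Rn n := algebraMap R (Rn n) (uu + 1)

section DvdChain

variable {M : Type*} [Monoid M]

def IsDvdChain (P : M) (f : ℕ → M) : Prop := f 0 ∣ P ∧ ∀ i, f (i + 1) ∣ f i

def padShift (P : M) (t : ℕ) (f : ℕ → M) (i : ℕ) : M := if i < t then P else f (i - t)

lemma IsDvdChain.padShift {P : M} {f : ℕ → M} (hf : IsDvdChain P f) (t : ℕ) :
    IsDvdChain P (padShift P t f) := by
  refine ⟨?_, fun i => ?_⟩ <;> unfold _root_.padShift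
  · split_ifs
    · exact dvd_rfl
    · rw [Nat.zero_sub]
      exact hf.1
  · split_ifs with hi₁ hi
    · exact dvd_rfl
    · omega
    · rw [show i + 1 - t = 0 by omega]
      exact hf.1
    · rw [show i + 1 - t = i - t + 1 by omega]
      exact hf.2 _

end DvdChain

section SpanPowMul

variable {A S : Type*} [Semiring A] [CommRing S] (ι : A →+* S) (w : S)

def spanPowMul (f : ℕ → A) : Ideal S := Ideal.span (Set.range fun i => w ^ i * ι (f i))

lemma pow_mul_mem_spanPowMul (f : ℕ → A) (i : ℕ) : w ^ i * ι (f i) ∈ spanPowMul ι w f :=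
  Ideal.subset_span ⟨i, rfl⟩

lemma span_singleton_mul_spanPowMul (c : S) (f : ℕ → A) :
    Ideal.span {c} * spanPowMul ι w f = Ideal.span (Set.range fun i => c * (w ^ i * ι (f i))) := by
  rw [spanPowMul, Ideal.span_mul_span', Set.singleton_mul, ← Set.range_comp]
  rfl

lemma span_singleton_map_mul_spanPowMul (g : A) (f : ℕ → A) :
    Ideal.span {ι g} * spanPowMul ι w f = spanPowMul ι w fun i => g * f i := by
  rw [span_singleton_mul_spanPowMul, spanPowMul]
  simp only [map_mul, mul_left_comm (ι g)]

lemma span_singleton_pow_mul_spanPowMul {P : A} (hP : ι P = 0) (t : ℕ) (f : ℕ → A) :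
    Ideal.span {w ^ t} * spanPowMul ι w f = spanPowMul ι w (padShift P t f) := by
  rw [span_singleton_mul_spanPowMul]
  apply le_antisymm
  · rw [Ideal.span_le, Set.range_subset_iff]
    intro i
    rw [SetLike.mem_coe]
    convert pow_mul_mem_spanPowMul ι w (padShift P t f) (i + t) using 1
    simp only [padShift, if_neg (Nat.not_lt.2 (Nat.le_add_left t i)), Nat.add_sub_cancel]
    ring
  · rw [spanPowMul, Ideal.span_le, Set.range_subset_iff]
    intro i
    by_cases hi : i < t
    · simp [padShift, hi, hP]
    · obtain ⟨j, rfl⟩ := Nat.exists_eq_add_of_le (Nat.not_lt.1 hi)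
      refine Ideal.subset_span ⟨j, ?_⟩
      simp only [padShift, hi, if_false, Nat.add_sub_cancel_left]
      ring

lemma spanPowMul_eq_span_four (hw : w ^ 4 = 0) (f : ℕ → A) :
    spanPowMul ι w f =
      Ideal.span {ι (f 0), w * ι (f 1), w ^ 2 * ι (f 2), w ^ 3 * ι (f 3)} := by
  apply le_antisymm
  · rw [spanPowMul, Ideal.span_le, Set.range_subset_iff]
    rintro (_ | _ | _ | _ | i)
    iterate 4 exact Ideal.subset_span (by simp)
    rw [show w ^ (i + 1 + 1 + 1 + 1) = w ^ i * w ^ 4 by ring, hw, mul_zero, zero_mul]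
    exact zero_mem _
  · have h := pow_mul_mem_spanPowMul ι w f
    simp only [Ideal.span_le, Set.insert_subset_iff, Set.singleton_subset_iff, SetLike.mem_coe]
    exact ⟨by simpa using h 0, by simpa using h 1, h 2, h 3⟩

end SpanPowMul

section SpanPowMulGcd

variable {A S : Type*} [EuclideanDomain A] [DecidableEq A] [CommRing S] (ι : A →+* S) (w : S)

lemma IsDvdChain.gcd_mul {P : A} {f b : ℕ → A}
    (hf : IsDvdChain P f) (hb : IsDvdChain P b) (g : A) :
    IsDvdChain P fun i => EuclideanDomain.gcd (g * f i) (b i) :=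
  ⟨(EuclideanDomain.gcd_dvd_right _ _).trans hb.1, fun i =>
    EuclideanDomain.dvd_gcd
      ((EuclideanDomain.gcd_dvd_left _ _).trans (mul_dvd_mul_left g (hf.2 i)))
      ((EuclideanDomain.gcd_dvd_right _ _).trans (hb.2 i))⟩

lemma spanPowMul_sup (a b : ℕ → A) :
    spanPowMul ι w a ⊔ spanPowMul ι w b =
      spanPowMul ι w fun i => EuclideanDomain.gcd (a i) (b i) := by
  apply le_antisymm
  · refine sup_le ?_ ?_ <;> rw [spanPowMul, Ideal.span_le, Set.range_subset_iff] <;> intro i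
    · exact Ideal.mem_of_dvd _ (mul_dvd_mul_left _ (map_dvd ι (EuclideanDomain.gcd_dvd_left _ _)))
        (pow_mul_mem_spanPowMul ι w _ i)
    · exact Ideal.mem_of_dvd _ (mul_dvd_mul_left _ (map_dvd ι (EuclideanDomain.gcd_dvd_right _ _)))
        (pow_mul_mem_spanPowMul ι w _ i)
  · rw [spanPowMul, Ideal.span_le, Set.range_subset_iff]
    intro i
    have bezout : w ^ i * ι (EuclideanDomain.gcd (a i) (b i)) =
        ι (EuclideanDomain.gcdA (a i) (b i)) * (w ^ i * ι (a i)) +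
          ι (EuclideanDomain.gcdB (a i) (b i)) * (w ^ i * ι (b i)) := by
      rw [EuclideanDomain.gcd_eq_gcd_ab, map_add, map_mul, map_mul]
      ring
    rw [SetLike.mem_coe, bezout]
    exact add_mem (Ideal.mul_mem_left _ _ (Ideal.mem_sup_left (pow_mul_mem_spanPowMul ι w a i)))
      (Ideal.mul_mem_left _ _ (Ideal.mem_sup_right (pow_mul_mem_spanPowMul ι w b i)))

lemma exists_span_pair_mul_spanPowMul {P : A} (hP : ι P = 0) (g : A) (t : ℕ) {f : ℕ → A}
    (hf : IsDvdChain P f) :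
    ∃ f', IsDvdChain P f' ∧ Ideal.span {ι g, w ^ t} * spanPowMul ι w f = spanPowMul ι w f' :=
  ⟨_, hf.gcd_mul (hf.padShift t) g, by
    rw [Ideal.span_insert, Ideal.sup_mul, span_singleton_map_mul_spanPowMul,
      span_singleton_pow_mul_spanPowMul ι w hP, spanPowMul_sup]⟩

lemma exists_list_prod_eq_spanPowMul {P : A} (hP : ι P = 0) (L : List (A × ℕ)) :
    ∃ f, IsDvdChain P f ∧
      (L.map fun p => Ideal.span {ι p.1, w ^ p.2}).prod = spanPowMul ι w f := by
  induction L with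
  | nil =>
    refine ⟨fun _ => 1, ⟨one_dvd P, fun _ => dvd_rfl⟩, ?_⟩
    rw [List.map_nil, List.prod_nil, Ideal.one_eq_top, eq_comm, Ideal.eq_top_iff_one]
    simpa using pow_mul_mem_spanPowMul ι w (fun _ => 1) 0
  | cons p L ih =>
    obtain ⟨f, hf, hprod⟩ := ih
    obtain ⟨f', hf', hmul⟩ := exists_span_pair_mul_spanPowMul ι w hP p.1 p.2 hf
    exact ⟨f', hf', by rw [List.map_cons, List.prod_cons, hprod, hmul]⟩

end SpanPowMulGcd

lemma w_pow_four (n : ℕ) : w n ^ 4 = 0 := by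
  have two_eq_zero : (2 : R) = 0 := by
    rw [← map_ofNat (algebraMap (ZMod 2) R) 2, show (2 : ZMod 2) = 0 from rfl, map_zero]
  have uu_pow_four : uu ^ 4 = 1 := by
    have h := AdjoinRoot.mk_self (f := (Polynomial.X ^ 4 - 1 : Polynomial (ZMod 2)))
    rwa [map_sub, map_pow, map_one, sub_eq_zero] at h
  have : (uu + 1) ^ 4 = 0 := by
    linear_combination uu_pow_four + (2 * uu ^ 3 + 3 * uu ^ 2 + 2 * uu + 1) * two_eq_zero
  rw [w, ← map_pow, this, map_zero]

lemma iota_X_pow_sub_one (n : ℕ) : iota n (Polynomial.X ^ n - 1) = 0 := by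
  show AdjoinRoot.mk _ (Polynomial.map (algebraMap (ZMod 2) R) (Polynomial.X ^ n - 1)) = 0
  rw [Polynomial.map_sub, Polynomial.map_pow, Polynomial.map_X, Polynomial.map_one]
  exact AdjoinRoot.mk_self

theorem stmt15_general (n : ℕ)
    (L : List (Polynomial (ZMod 2) × ℕ)) :
    ∃ f0 f1 f2 f3 : Polynomial (ZMod 2),
      f3 ∣ f2 ∧ f2 ∣ f1 ∧ f1 ∣ f0 ∧ f0 ∣ Polynomial.X ^ n - 1 ∧
      (L.map fun p => Ideal.span {iota n p.1, (w n) ^ p.2}).prod =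
        Ideal.span {iota n f0, w n * iota n f1,
          (w n) ^ 2 * iota n f2, (w n) ^ 3 * iota n f3} := by
  obtain ⟨f, ⟨hf0, hf⟩, hprod⟩ :=
    exists_list_prod_eq_spanPowMul (iota n) (w n) (iota_X_pow_sub_one n) L
  exact ⟨f 0, f 1, f 2, f 3, hf 2, hf 1, hf 0, hf0,
    hprod.trans (spanPowMul_eq_span_four _ _ (w_pow_four n) f)⟩

theorem stmt15 (n : ℕ) (hn : 0 < n)
    (L : List (Polynomial (ZMod 2) × ℕ))
    (hL : ∀ p ∈ L, p.1 ∣ Polynomial.X ^ n - 1 ∧ p.2 ≤ 4) :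
    ∃ f0 f1 f2 f3 : Polynomial (ZMod 2),
      f3 ∣ f2 ∧ f2 ∣ f1 ∧ f1 ∣ f0 ∧ f0 ∣ Polynomial.X ^ n - 1 ∧
      (L.map fun p => Ideal.span {iota n p.1, (w n) ^ p.2}).prod =
        Ideal.span {iota n f0, w n * iota n f1,
          (w n) ^ 2 * iota n f2, (w n) ^ 3 * iota n f3} :=
  stmt15_general n L
end
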